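/- Let n ≥ 1 and 1 ≤ t ≤ n. The map sending a Young diagram λ contained in the t × (n−t+1) rectangle (i.e. a partition with at most t parts, each at most n−t+1) to the vector Λ_t − Σ_{(i,j)∈λ} α_{t−i+j} ∈ ℤ^{n+1} is a bijection from the set of such Young diagrams onto the orbit of Λ_t under the symmetric group S_{n+1} permuting the coordinates of ℤ^{n+1}; explicitly, onto the set of all 0/1-vectors in ℤ^{n+1} having exactly t entries equal to 1. -/

import Mathlib

namespace Stmt0

/-- Standard basis vector `e_k` (1-indexed) of `ℤ^{n+1}`. -/
def E (n k : ℕ) : Fin (n + 1) → ℤ := fun x => if (x : ℕ) + 1 = k then 1 else 0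

/-- Simple root `α_r = e_r - e_{r+1}` of type `A_n` (1-indexed, for `1 ≤ r ≤ n`). -/
def alpha (n r : ℕ) : Fin (n + 1) → ℤ := E n r - E n (r + 1)

/-- Fundamental weight `Λ_t = e_1 + ⋯ + e_t`. -/
def Lam (n t : ℕ) : Fin (n + 1) → ℤ := fun x => if (x : ℕ) < t then 1 else 0

/-- Young diagrams contained in the `t × (n - t + 1)` rectangle: partitions with at
most `t` parts, each part at most `n - t + 1`; the `i`-th part (`1`-indexed `i`)
is `l ⟨i - 1, _⟩`. -/
def YD (n t : ℕ) : Type :=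
  {l : Fin t → ℕ // (∀ i j : Fin t, i ≤ j → l j ≤ l i) ∧ ∀ i, l i ≤ n - t + 1}

/-- `λ ↦ Λ_t - ∑_{(i,j) ∈ λ} α_{t - i + j}` (the box `(i,j)` has residue `t - i + j`). -/
def toWt (n t : ℕ) (l : YD n t) : Fin (n + 1) → ℤ :=
  Lam n t - ∑ i : Fin t, ∑ j ∈ Finset.Icc 1 (l.1 i), alpha n (t + j - (i.val + 1))

/- telescoping -/
lemma telescope (n a m : ℕ) :
    ∑ j ∈ Finset.Icc 1 m, alpha n (a + j) = E n (a + 1) - E n (a + m + 1) := by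
  induction m with
  | zero => simp
  | succ m ih =>
    rw [Finset.sum_Icc_succ_top (by omega), ih]
    have h : a + (m + 1) = a + m + 1 := rfl
    rw [h, alpha]
    abel

lemma Lam_eq_sum (n t : ℕ) (h : t ≤ n + 1) :
    Lam n t = ∑ i : Fin t, E n (t - i.val) := by
  funext x
  rw [Finset.sum_apply]
  unfold Lam E
  by_cases hx : (x : ℕ) < t
  · rw [if_pos hx, Finset.sum_eq_single (⟨t - (x : ℕ) - 1, by omega⟩ : Fin t)]
    · rw [if_pos (by simp only [Fin.val_mk]; omega)]
    · intro j _ hj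
      rw [if_neg]
      intro hc
      apply hj
      have := j.isLt
      apply Fin.ext
      simp only
      omega
    · intro hc; exact absurd (Finset.mem_univ _) hc
  · rw [if_neg hx]
    symm
    apply Finset.sum_eq_zero
    intro i _
    have := i.isLt
    rw [if_neg (by omega)]

lemma toWt_eq_sum (n t : ℕ) (ht : t ≤ n) (l : YD n t) :
    toWt n t l = ∑ i : Fin t, E n (t - i.val + l.1 i) := by
  unfold toWt
  have h1 : ∀ i : Fin t,
      ∑ j ∈ Finset.Icc 1 (l.1 i), alpha n (t + j - (i.val + 1))
        = E n (t - i.val) - E n (t - i.val + l.1 i) := by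
    intro i
    have hiv : i.val + 1 ≤ t := i.isLt
    have hc : ∀ j ∈ Finset.Icc 1 (l.1 i),
        alpha n (t + j - (i.val + 1)) = alpha n ((t - (i.val + 1)) + j) := by
      intro j hj
      have hjj : t + j - (i.val + 1) = t - (i.val + 1) + j := by omega
      rw [hjj]
    rw [Finset.sum_congr rfl hc, telescope]
    have ha : t - (i.val + 1) + 1 = t - i.val := by omega
    have hb : t - (i.val + 1) + l.1 i + 1 = t - i.val + l.1 i := by omega
    rw [ha, hb]
  rw [Finset.sum_congr rfl (fun i _ => h1 i), Finset.sum_sub_distrib,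
    ← Lam_eq_sum n t (by omega)]
  abel

lemma q_lt (n t : ℕ) (l : YD n t) (i j : Fin t) (h : i < j) :
    t - j.val + l.1 j < t - i.val + l.1 i := by
  have h1 := l.2.1 i j (le_of_lt h)
  have h2 := j.isLt
  have h3 : i.val < j.val := h
  omega

lemma q_inj (n t : ℕ) (l : YD n t) : Function.Injective
    (fun i : Fin t => t - i.val + l.1 i) := by
  intro a b hab
  rcases lt_trichotomy a b with h | h | h
  · exact absurd hab (by have := q_lt n t l a b h; simp only at *; omega)
  · exact h
  · exact absurd hab (by have := q_lt n t l b a h; simp only at *; omega)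

lemma toWt_apply (n t : ℕ) (ht : t ≤ n) (l : YD n t) (x : Fin (n + 1)) :
    toWt n t l x = if ∃ i : Fin t, t - i.val + l.1 i = (x : ℕ) + 1 then 1 else 0 := by
  rw [toWt_eq_sum n t ht l, Finset.sum_apply]
  unfold E
  by_cases h : ∃ i : Fin t, t - i.val + l.1 i = (x : ℕ) + 1
  · obtain ⟨i, hi⟩ := h
    rw [if_pos ⟨i, hi⟩, Finset.sum_eq_single i]
    · rw [if_pos hi.symm]
    · intro j _ hj
      rw [if_neg]
      intro hc
      exact hj (q_inj n t l (by simp only; omega))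
    · intro hc; exact absurd (Finset.mem_univ _) hc
  · rw [if_neg h]
    apply Finset.sum_eq_zero
    intro i _
    rw [if_neg]
    intro hc
    exact h ⟨i, hc.symm⟩


/-- strict mono gap lemma -/
lemma aux_mono {t : ℕ} (f : Fin t → ℕ) (hf : StrictMono f)
    (i j : Fin t) (h : (i : ℕ) ≤ (j : ℕ)) : f i + ((j : ℕ) - (i : ℕ)) ≤ f j := by
  obtain ⟨d, hd⟩ := Nat.exists_eq_add_of_le h
  clear h
  induction d generalizing j with
  | zero =>
    have : i = j := Fin.ext (by omega)
    subst this
    simp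
  | succ d ih =>
    have hjt := j.isLt
    have hd' : (i : ℕ) + d < t := by omega
    have h1 := ih ⟨(i : ℕ) + d, hd'⟩ (by simp)
    have h2 : f ⟨(i : ℕ) + d, hd'⟩ < f j := hf (by simp [Fin.lt_def]; omega)
    simp only [Fin.val_mk] at h1 h2
    omega

/-- two strictly antitone maps with the same image agree -/
lemma antitone_eq_of_image_eq {t : ℕ} {g g' : Fin t → ℕ}
    (hg : ∀ i j : Fin t, i < j → g j < g i) (hg' : ∀ i j : Fin t, i < j → g' j < g' i)
    (h : Finset.image g Finset.univ = Finset.image g' Finset.univ) : g = g' := by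
  have hinj : Function.Injective g := by
    intro a b hab
    rcases lt_trichotomy a b with hl | hl | hl
    · exact absurd hab (by have := hg a b hl; omega)
    · exact hl
    · exact absurd hab (by have := hg b a hl; omega)
  have hG : StrictMono (g ∘ Fin.rev) := by
    intro i j hij
    exact hg _ _ (Fin.rev_lt_rev.mpr hij)
  have hG' : StrictMono (g' ∘ Fin.rev) := by
    intro i j hij
    exact hg' _ _ (Fin.rev_lt_rev.mpr hij)
  have hcard : (Finset.image g Finset.univ).card = t := by
    rw [Finset.card_image_of_injective _ hinj, Finset.card_univ, Fintype.card_fin]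
  have h1 : g ∘ Fin.rev = (Finset.image g Finset.univ).orderEmbOfFin hcard :=
    Finset.orderEmbOfFin_unique hcard
      (fun x => Finset.mem_image.mpr ⟨_, Finset.mem_univ _, rfl⟩) hG
  have h2 : g' ∘ Fin.rev = (Finset.image g Finset.univ).orderEmbOfFin hcard :=
    Finset.orderEmbOfFin_unique hcard
      (fun x => by rw [h]; exact Finset.mem_image.mpr ⟨_, Finset.mem_univ _, rfl⟩) hG'
  funext i
  have := congrFun (h1.trans h2.symm) (Fin.rev i)
  simpa [Fin.rev_rev] using this

lemma card_filter_lt (n t : ℕ) (h : t ≤ n + 1) :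
    (Finset.univ.filter fun y : Fin (n + 1) => (y : ℕ) < t).card = t := by
  rw [show (Finset.univ.filter fun y : Fin (n + 1) => (y : ℕ) < t)
      = Finset.map (Fin.castLEEmb h) Finset.univ by
    ext y
    simp only [Finset.mem_filter, Finset.mem_univ, true_and, Finset.mem_map,
      Fin.castLEEmb_apply]
    constructor
    · intro hy
      exact ⟨⟨(y : ℕ), hy⟩, by ext; simp⟩
    · rintro ⟨j, rfl⟩
      simpa using j.isLt]
  rw [Finset.card_map, Finset.card_univ, Fintype.card_fin]


lemma filter_toWt (n t : ℕ) (ht : t ≤ n) (l : YD n t) :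
    (Finset.univ.filter fun x : Fin (n + 1) => toWt n t l x = 1).card = t := by
  have hb : ∀ i : Fin t, t - i.val + l.1 i - 1 < n + 1 := fun i => by
    have h1 := l.2.2 i; have h2 := i.isLt; omega
  set f : Fin t → Fin (n + 1) := fun i => ⟨t - i.val + l.1 i - 1, hb i⟩ with hf
  have heq : (Finset.univ.filter fun x : Fin (n + 1) => toWt n t l x = 1)
      = Finset.image f Finset.univ := by
    ext x
    simp only [Finset.mem_filter, Finset.mem_univ, true_and, Finset.mem_image]
    rw [toWt_apply n t ht l]
    by_cases hx : ∃ i : Fin t, t - i.val + l.1 i = (x : ℕ) + 1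
    · rw [if_pos hx]
      obtain ⟨i, hi⟩ := hx
      have hit := i.isLt
      constructor
      · intro _
        exact ⟨i, Fin.ext (by simp only [hf]; omega)⟩
      · intro _; rfl
    · rw [if_neg hx]
      constructor
      · intro h; exact absurd h (by norm_num)
      · rintro ⟨i, hi⟩
        exfalso
        apply hx
        have hit := i.isLt
        have := congrArg Fin.val hi
        simp only [hf] at this
        exact ⟨i, by omega⟩
  rw [heq, Finset.card_image_of_injective _ ?_, Finset.card_univ, Fintype.card_fin]
  intro a b hab
  have := congrArg Fin.val hab
  simp only [hf] at this
  have ha := a.isLt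
  have hb' := b.isLt
  exact q_inj n t l (by simp only; omega)

lemma toWt_inj (n t : ℕ) (ht : t ≤ n) (l l' : YD n t)
    (h : toWt n t l = toWt n t l') : l = l' := by
  have himg : Finset.image (fun i : Fin t => t - i.val + l.1 i) Finset.univ
      = Finset.image (fun i : Fin t => t - i.val + l'.1 i) Finset.univ := by
    have key : ∀ (a b : YD n t), toWt n t a = toWt n t b → ∀ c,
        c ∈ Finset.image (fun i : Fin t => t - i.val + a.1 i) Finset.univ →
        c ∈ Finset.image (fun i : Fin t => t - i.val + b.1 i) Finset.univ := by
      intro a b hab c hc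
      obtain ⟨i, -, hi⟩ := Finset.mem_image.mp hc
      have h1 := a.2.2 i
      have h2 := i.isLt
      have hcn : c - 1 < n + 1 := by omega
      have hone : toWt n t a ⟨c - 1, hcn⟩ = 1 := by
        rw [toWt_apply n t ht a, if_pos ⟨i, by simp only [Fin.val_mk]; omega⟩]
      rw [hab, toWt_apply n t ht b] at hone
      by_cases hex : ∃ j : Fin t, t - j.val + b.1 j = ((⟨c - 1, hcn⟩ : Fin (n + 1)) : ℕ) + 1
      · obtain ⟨j, hj⟩ := hex
        clear hone
        have hj' : t - (j : ℕ) + b.1 j = c - 1 + 1 := hj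
        have h3 := j.isLt
        exact Finset.mem_image.mpr ⟨j, Finset.mem_univ _, by omega⟩
      · rw [if_neg hex] at hone; exact absurd hone (by norm_num)
    ext c
    exact ⟨key l l' h c, key l' l h.symm c⟩
  have := antitone_eq_of_image_eq (q_lt n t l) (q_lt n t l') himg
  apply Subtype.ext
  funext i
  have := congrFun this i
  have this : t - i.val + l.1 i = t - i.val + l'.1 i := this
  omega

lemma toWt_surj (n t : ℕ) (ht1 : 1 ≤ t) (ht : t ≤ n) (v : Fin (n + 1) → ℤ)
    (h01 : ∀ x, v x = 0 ∨ v x = 1)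
    (hcard : (Finset.univ.filter fun x => v x = 1).card = t) :
    ∃ l : YD n t, toWt n t l = v := by
  set S := Finset.univ.filter fun x : Fin (n + 1) => v x = 1 with hS
  set F : Fin t → ℕ := fun k => ((S.orderEmbOfFin hcard) k : ℕ) with hF
  have hFmono : StrictMono F := fun a b hab => (S.orderEmbOfFin hcard).strictMono hab
  have hFb : ∀ k, F k ≤ n := fun k => Nat.lt_succ_iff.mp (S.orderEmbOfFin hcard k).isLt
  set Q : Fin t → ℕ := fun i => F (Fin.rev i) with hQ
  have hrev : ∀ i : Fin t, (Fin.rev i : ℕ) = t - (i.val + 1) := fun i => Fin.val_rev i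
  have hQlow : ∀ i : Fin t, t - 1 - (i : ℕ) ≤ Q i := by
    intro i
    have h := aux_mono F hFmono ⟨0, by omega⟩ (Fin.rev i) (Nat.zero_le _)
    have h2 := hrev i
    have h3 := i.isLt
    have hQi : Q i = F (Fin.rev i) := rfl
    have h0 : ((⟨0, by omega⟩ : Fin t) : ℕ) = 0 := rfl
    omega
  have hQhigh : ∀ i : Fin t, Q i ≤ n - (i : ℕ) := by
    intro i
    have h := aux_mono F hFmono (Fin.rev i) ⟨t - 1, by omega⟩
      (by rw [hrev]; show t - ((i : ℕ) + 1) ≤ t - 1; omega)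
    have h2 := hrev i
    have h3 := i.isLt
    have h4 := hFb ⟨t - 1, by omega⟩
    have hQi : Q i = F (Fin.rev i) := rfl
    have h5 : ((⟨t - 1, by omega⟩ : Fin t) : ℕ) = t - 1 := rfl
    omega
  have hQgap : ∀ i j : Fin t, (i : ℕ) ≤ (j : ℕ) → Q j + ((j : ℕ) - (i : ℕ)) ≤ Q i := by
    intro i j hij
    have h := aux_mono F hFmono (Fin.rev j) (Fin.rev i) (by rw [hrev, hrev]; omega)
    have h2 := hrev i
    have h3 := hrev j
    have h4 := j.isLt
    have hQi : Q i = F (Fin.rev i) := rfl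
    have hQj : Q j = F (Fin.rev j) := rfl
    omega
  have hmono : ∀ i j : Fin t, i ≤ j →
      Q j + 1 - (t - (j : ℕ)) ≤ Q i + 1 - (t - (i : ℕ)) := by
    intro i j hij
    have h1 := hQgap i j hij
    have h2 := hQlow j
    have h3 := j.isLt
    omega
  have hbound : ∀ i : Fin t, Q i + 1 - (t - (i : ℕ)) ≤ n - t + 1 := by
    intro i
    have h1 := hQhigh i
    have h2 := i.isLt
    omega
  refine ⟨⟨fun i => Q i + 1 - (t - (i : ℕ)), hmono, hbound⟩, ?_⟩
  funext x
  refine (toWt_apply n t ht _ x).trans ?_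
  show (if ∃ i : Fin t, t - i.val + (Q i + 1 - (t - (i : ℕ))) = (x : ℕ) + 1
      then (1 : ℤ) else 0) = v x
  have hmem : ∀ y : Fin (n + 1), y ∈ S ↔ v y = 1 := by
    intro y; simp [hS]
  by_cases hx : v x = 1
  · have hxS : x ∈ S := (hmem x).mpr hx
    have hxR : x ∈ Set.range (S.orderEmbOfFin hcard) := by
      rw [Finset.range_orderEmbOfFin]
      exact_mod_cast hxS
    obtain ⟨k, hk⟩ := hxR
    have hQk : Q (Fin.rev k) = (x : ℕ) := by
      simp only [hQ, Fin.rev_rev, hF, hk]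
    rw [if_pos ?_, hx]
    refine ⟨Fin.rev k, ?_⟩
    have h1 := hQlow (Fin.rev k)
    have h2 := (Fin.rev k).isLt
    omega
  · have hx0 : v x = 0 := (h01 x).resolve_right hx
    rw [if_neg ?_, hx0]
    rintro ⟨i, hi⟩
    have h1 := hQlow i
    have h2 := i.isLt
    have hQx : Q i = (x : ℕ) := by omega
    have : x ∈ S := by
      have heq2 : S.orderEmbOfFin hcard (Fin.rev i) = x := Fin.ext hQx
      rw [← heq2]
      exact Finset.orderEmbOfFin_mem S hcard (Fin.rev i)
    exact hx ((hmem x).mp this)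


lemma Lam_perm_mem (n t : ℕ) (h : t ≤ n + 1) (σ : Equiv.Perm (Fin (n + 1))) :
    (∀ x, Lam n t (σ x) = 0 ∨ Lam n t (σ x) = 1) ∧
      (Finset.univ.filter fun x => Lam n t (σ x) = 1).card = t := by
  constructor
  · intro x
    unfold Lam
    split
    · right; rfl
    · left; rfl
  · have h1 : (Finset.univ.filter fun x => Lam n t (σ x) = 1)
        = Finset.univ.filter fun x => ((σ x : ℕ) < t) := by
      apply Finset.filter_congr
      intro x _
      unfold Lam
      split
      · simp_all
      · simp_all
    rw [h1]
    have h2 : (Finset.univ.filter fun x : Fin (n + 1) => ((σ x : ℕ) < t))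
        = Finset.image σ.symm (Finset.univ.filter fun y : Fin (n + 1) => ((y : ℕ) < t)) := by
      ext x
      simp only [Finset.mem_filter, Finset.mem_univ, true_and, Finset.mem_image]
      constructor
      · intro hx
        exact ⟨σ x, hx, σ.symm_apply_apply x⟩
      · rintro ⟨y, hy, rfl⟩
        simpa using hy
    rw [h2, Finset.card_image_of_injective _ σ.symm.injective, card_filter_lt n t h]

lemma exists_perm (n t : ℕ) (h : t ≤ n + 1) (v : Fin (n + 1) → ℤ)
    (h01 : ∀ x, v x = 0 ∨ v x = 1)
    (hcard : (Finset.univ.filter fun x => v x = 1).card = t) :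
    ∃ σ : Equiv.Perm (Fin (n + 1)), v = fun x => Lam n t (σ x) := by
  have c1 : Fintype.card {x : Fin (n + 1) // v x = 1}
      = Fintype.card {x : Fin (n + 1) // (x : ℕ) < t} := by
    rw [Fintype.card_subtype, Fintype.card_subtype, hcard, card_filter_lt n t h]
  have c2 : Fintype.card {x : Fin (n + 1) // ¬ v x = 1}
      = Fintype.card {x : Fin (n + 1) // ¬ (x : ℕ) < t} := by
    rw [Fintype.card_subtype_compl, Fintype.card_subtype_compl, c1]
  let e := Fintype.equivOfCardEq c1
  let e' := Fintype.equivOfCardEq c2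
  refine ⟨(Equiv.sumCompl fun x : Fin (n + 1) => v x = 1).symm.trans
    ((Equiv.sumCongr e e').trans (Equiv.sumCompl fun x : Fin (n + 1) => (x : ℕ) < t)), ?_⟩
  funext x
  by_cases hx : v x = 1
  · rw [hx]
    simp only [Equiv.trans_apply, Equiv.sumCongr_apply]
    rw [Equiv.sumCompl_symm_apply_of_pos (p := fun y => v y = 1) hx]
    simp only [Sum.map_inl, Equiv.sumCompl_apply_inl]
    unfold Lam
    rw [if_pos (e ⟨x, hx⟩).2]
  · have hx0 : v x = 0 := (h01 x).resolve_right hx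
    rw [hx0]
    simp only [Equiv.trans_apply, Equiv.sumCongr_apply]
    rw [Equiv.sumCompl_symm_apply_of_neg (p := fun y => v y = 1) hx]
    simp only [Sum.map_inr, Equiv.sumCompl_apply_inr]
    unfold Lam
    rw [if_neg (e' ⟨x, hx⟩).2]

theorem stmt0 (n t : ℕ) (hn : 1 ≤ n) (ht1 : 1 ≤ t) (htn : t ≤ n) :
    Set.BijOn (toWt n t) Set.univ
      {v : Fin (n + 1) → ℤ | (∀ x, v x = 0 ∨ v x = 1) ∧
        (Finset.univ.filter fun x => v x = 1).card = t} ∧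
    {v : Fin (n + 1) → ℤ | (∀ x, v x = 0 ∨ v x = 1) ∧
        (Finset.univ.filter fun x => v x = 1).card = t} =
      {v : Fin (n + 1) → ℤ | ∃ σ : Equiv.Perm (Fin (n + 1)), v = fun x => Lam n t (σ x)} := by
  constructor
  · refine ⟨?_, ?_, ?_⟩
    · intro l _
      refine ⟨?_, filter_toWt n t htn l⟩
      intro x
      rw [toWt_apply n t htn l x]
      split
      · right; rfl
      · left; rfl
    · intro l _ l' _ hll
      exact toWt_inj n t htn l l' hll
    · intro v hv
      obtain ⟨l, hl⟩ := toWt_surj n t ht1 htn v hv.1 hv.2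
      exact ⟨l, Set.mem_univ _, hl⟩
  · ext v
    simp only [Set.mem_setOf_eq]
    constructor
    · intro ⟨h01, hcard⟩
      exact exists_perm n t (by omega) v h01 hcard
    · rintro ⟨σ, rfl⟩
      exact Lam_perm_mem n t (by omega) σ

end Stmt0
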